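/- Every finite EI-category (a category in which every endomorphism is an isomorphism) has skeletal Möbius inversion. -/

import Mathlib

/-!
Writing `e` for the idempotent `e_C` and `ζ` for the zeta matrix, one has `e ζ = ζ = ζ e`, and then
`ζ` is invertible in the corner `e M e` as soon as `ζ + 1 - e` is invertible in `M`: if `b` is its
inverse, `ν = b e` works. So it suffices that `(ζ + 1 - e) u = 0` forces `u = 0`. Take `x` in the
support of `u` maximal for "there is a morphism `x ⟶ y`". In an EI-category morphisms both ways
between two objects force them to be isomorphic, so the rows indexed by the isomorphism class `T`
of `x` only see the entries of `u` on `T`. There the matrix is `1 + (g - 1/m) J`, with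
`g = |C(x,x)|`, `m = |T|` and `J` the all-ones matrix, and it is invertible because
`1 + m (g - 1/m) = m g ≠ 0`.
-/

open CategoryTheory
open scoped Classical

universe u v

/-- Convolution product on the Möbius algebra of rational-valued functions
on pairs of objects of a finite category. -/
noncomputable def conv (C : Type u) [Category.{v} C] [Fintype C]
    (α β : C → C → ℚ) : C → C → ℚ :=
  fun x y => ∑ z : C, α x z * β z y

/-- The size of the isomorphism class of an object. -/
noncomputable def isoCard (C : Type u) [Category.{v} C] [Fintype C] (x : C) : ℚ :=
  ((Finset.univ.filter fun z : C => Nonempty (x ≅ z)).card : ℚ)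

/-- The idempotent `e_C` : `e_C(x,y) = 1/|[x]|` if `x ≅ y`, and `0` otherwise. -/
noncomputable def eFun (C : Type u) [Category.{v} C] [Fintype C] : C → C → ℚ :=
  fun x y => if Nonempty (x ≅ y) then 1 / isoCard C x else 0

/-- The zeta function of a finite category: `ζ_C(x,y) = |C(x,y)|`. -/
noncomputable def zeta (C : Type u) [Category.{v} C] [Fintype C]
    [∀ x y : C, Fintype (x ⟶ y)] : C → C → ℚ :=
  fun x y => (Fintype.card (x ⟶ y) : ℚ)

/-- The Kronecker delta, the multiplicative identity of the Möbius algebra. -/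
noncomputable def delta (C : Type u) [Category.{v} C] [Fintype C] : C → C → ℚ :=
  fun x y => if x = y then 1 else 0

theorem exists_corner_inverse_of_isUnit_add_one_sub {R : Type*} [Ring R] {e z : R}
    (he : IsIdempotentElem e) (hez : e * z = z) (hze : z * e = z) (hu : IsUnit (z + 1 - e)) :
    ∃ ν : R, e * (ν * e) = ν ∧ z * ν = e ∧ ν * z = e := by
  obtain ⟨a, ha⟩ := hu
  have hea : e * a = z := by rw [ha, mul_sub, mul_add, hez, he.eq, mul_one, add_sub_cancel_right]
  have hae : a * e = z := by rw [ha, sub_mul, add_mul, hze, he.eq, one_mul, add_sub_cancel_right]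
  have hcomm : Commute e ↑a⁻¹ := Commute.units_inv_right (hea.trans hae.symm)
  refine ⟨↑a⁻¹ * e, ?_, ?_, ?_⟩
  · rw [mul_assoc, he.eq, ← mul_assoc, hcomm.eq, mul_assoc, he.eq]
  · calc z * (↑a⁻¹ * e) = a * (e * ↑a⁻¹) * e := by rw [← hae]; simp only [mul_assoc]
      _ = a * (↑a⁻¹ * e) * e := by rw [hcomm.eq]
      _ = e := by rw [← mul_assoc, a.mul_inv, one_mul, he.eq]
  · rw [mul_assoc, hez, ← hae, ← mul_assoc, a.inv_mul, one_mul]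

theorem eq_zero_of_forall_mul_sum_add_eq_zero {ι K : Type*} [Field K] {T : Finset ι} {c : K}
    (hc : 1 + T.card * c ≠ 0) {u : ι → K} (hu : ∀ a ∈ T, c * ∑ y ∈ T, u y + u a = 0) :
    ∀ a ∈ T, u a = 0 := by
  have hsum : (1 + T.card * c) * ∑ y ∈ T, u y = 0 := by
    have := Finset.sum_eq_zero hu
    rw [Finset.sum_add_distrib, Finset.sum_const, nsmul_eq_mul] at this
    linear_combination this
  have hS : ∑ y ∈ T, u y = 0 := (mul_eq_zero.mp hsum).resolve_left hc
  intro a ha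
  simpa [hS] using hu a ha

section Category

variable {C : Type u} [Category.{v} C]

theorem exists_mem_forall_hom_imp_hom [Finite C] {s : Set C} (hs : s.Nonempty) :
    ∃ x ∈ s, ∀ y ∈ s, Nonempty (x ⟶ y) → Nonempty (y ⟶ x) := by
  let r : C → C → Prop := fun y x => Nonempty (x ⟶ y) ∧ ¬Nonempty (y ⟶ x)
  have : IsTrans C r := ⟨fun _ _ _ ⟨⟨f⟩, _⟩ ⟨⟨g⟩, hcb⟩ => ⟨⟨g ≫ f⟩, fun ⟨k⟩ => hcb ⟨f ≫ k⟩⟩⟩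
  have : Std.Irrefl r := ⟨fun _ h => h.2 h.1⟩
  obtain ⟨x, hx, hmin⟩ := (Finite.wellFounded_of_trans_of_irrefl r).has_min s hs
  exact ⟨x, hx, fun y hy hxy => not_not.mp fun hyx => hmin y hy ⟨hxy, hyx⟩⟩

theorem nonempty_iso_of_hom_of_hom (hEI : ∀ (x : C) (f : x ⟶ x), IsIso f) {x y : C}
    (f : x ⟶ y) (g : y ⟶ x) : Nonempty (x ≅ y) := by
  have := hEI x (f ≫ g)
  have := hEI y (g ≫ f)
  have : Epi f := epi_of_epi g f
  have : IsSplitMono f :=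
    IsSplitMono.mk' ⟨g ≫ inv (f ≫ g), by rw [← Category.assoc, IsIso.hom_inv_id]⟩
  have := isIso_of_epi_of_isSplitMono f
  exact ⟨asIso f⟩

variable [Fintype C]

theorem isoCard_eq_of_iso {x y : C} (e : x ≅ y) : isoCard C x = isoCard C y := by
  unfold isoCard
  congr 2
  exact Finset.filter_congr fun z _ => ⟨fun ⟨i⟩ => ⟨e.symm ≪≫ i⟩, fun ⟨i⟩ => ⟨e ≪≫ i⟩⟩

theorem isoCard_pos (x : C) : 0 < isoCard C x := by
  unfold isoCard
  exact_mod_cast Finset.card_pos.mpr ⟨x, by simpa using ⟨Iso.refl x⟩⟩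

theorem eFun_eq_of_iso_left {x x' : C} (e : x ≅ x') (y : C) : eFun C x y = eFun C x' y := by
  have hiff : Nonempty (x ≅ y) ↔ Nonempty (x' ≅ y) :=
    ⟨fun ⟨i⟩ => ⟨e.symm ≪≫ i⟩, fun ⟨i⟩ => ⟨e ≪≫ i⟩⟩
  simp only [eFun, hiff, isoCard_eq_of_iso e]

theorem eFun_comm (x y : C) : eFun C x y = eFun C y x := by
  by_cases h : Nonempty (x ≅ y)
  · have h' : Nonempty (y ≅ x) := ⟨h.some.symm⟩
    rw [eFun, eFun, if_pos h, if_pos h', isoCard_eq_of_iso h.some]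
  · have h' : ¬Nonempty (y ≅ x) := fun ⟨i⟩ => h ⟨i.symm⟩
    rw [eFun, eFun, if_neg h, if_neg h']

theorem zeta_eq_of_iso [∀ x y : C, Fintype (x ⟶ y)] {x x' y y' : C} (e₁ : x ≅ x') (e₂ : y ≅ y') :
    zeta C x y = zeta C x' y' := by
  simp only [zeta, Fintype.card_congr (e₁.homCongr e₂)]

theorem sum_eFun_mul {x : C} {f : C → ℚ} (hf : ∀ z, Nonempty (x ≅ z) → f z = f x) :
    ∑ z, eFun C x z * f z = f x := by
  have hterm : ∀ z, eFun C x z * f z = if Nonempty (x ≅ z) then 1 / isoCard C x * f x else 0 := by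
    intro z
    by_cases h : Nonempty (x ≅ z) <;> simp [eFun, h, hf z]
  simp only [hterm, Finset.sum_ite, Finset.sum_const_zero, add_zero, Finset.sum_const,
    nsmul_eq_mul]
  rw [← mul_assoc, show ((Finset.univ.filter fun z : C => Nonempty (x ≅ z)).card : ℚ)
    = isoCard C x from rfl, mul_one_div_cancel (isoCard_pos x).ne', one_mul]

theorem sum_mul_eFun {y : C} {f : C → ℚ} (hf : ∀ z, Nonempty (z ≅ y) → f z = f y) :
    ∑ z, f z * eFun C z y = f y := by
  simp only [mul_comm (f _), eFun_comm _ y]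
  exact sum_eFun_mul fun z ⟨i⟩ => hf z ⟨i.symm⟩

theorem isIdempotentElem_eFun : IsIdempotentElem (Matrix.of (eFun C)) := by
  ext x y
  exact sum_eFun_mul fun z ⟨i⟩ => (eFun_eq_of_iso_left i y).symm

variable [∀ x y : C, Fintype (x ⟶ y)]

theorem eFun_mul_zeta : Matrix.of (eFun C) * Matrix.of (zeta C) = Matrix.of (zeta C) := by
  ext x y
  exact sum_eFun_mul fun z ⟨i⟩ => zeta_eq_of_iso i.symm (Iso.refl y)

theorem zeta_mul_eFun : Matrix.of (zeta C) * Matrix.of (eFun C) = Matrix.of (zeta C) := by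
  ext x y
  exact sum_mul_eFun fun z ⟨i⟩ => zeta_eq_of_iso (Iso.refl x) i

theorem zeta_add_one_sub_eFun_apply (a y : C) :
    (Matrix.of (zeta C) + 1 - Matrix.of (eFun C)) a y
      = zeta C a y + (if a = y then 1 else 0) - eFun C a y := by
  simp [Matrix.one_apply]

theorem zeta_add_one_sub_eFun_apply_of_isEmpty {a y : C} (h : IsEmpty (a ⟶ y)) :
    (Matrix.of (zeta C) + 1 - Matrix.of (eFun C)) a y = 0 := by
  have hne : a ≠ y := by rintro rfl; exact h.false (𝟙 a)
  have hiso : ¬Nonempty (a ≅ y) := fun ⟨i⟩ => h.false i.hom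
  simp [zeta, eFun, hne, hiso]

theorem zeta_add_one_sub_eFun_apply_of_iso {x a y : C} (ha : x ≅ a) (hy : x ≅ y) :
    (Matrix.of (zeta C) + 1 - Matrix.of (eFun C)) a y
      = (zeta C x x - 1 / isoCard C x) + (if a = y then 1 else 0) := by
  rw [zeta_add_one_sub_eFun_apply, zeta_eq_of_iso ha.symm hy.symm, eFun_eq_of_iso_left ha.symm,
    eFun, if_pos (⟨hy⟩ : Nonempty (x ≅ y))]
  ring

theorem eq_zero_of_zeta_add_one_sub_eFun_mulVec_eq_zero (hEI : ∀ (x : C) (f : x ⟶ x), IsIso f)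
    {u : C → ℚ} (hu : (Matrix.of (zeta C) + 1 - Matrix.of (eFun C)).mulVec u = 0) : u = 0 := by
  by_contra hne
  obtain ⟨x, hx, hmax⟩ :=
    exists_mem_forall_hom_imp_hom (s := {y | u y ≠ 0}) (Function.ne_iff.mp hne)
  set T := Finset.univ.filter fun z : C => Nonempty (x ≅ z)
  have hrow : ∀ a ∈ T, (zeta C x x - 1 / isoCard C x) * ∑ y ∈ T, u y + u a = 0 := by
    intro a ha
    obtain ⟨ia⟩ : Nonempty (x ≅ a) := (Finset.mem_filter.mp ha).2
    -- maximality of `x` and EI kill every entry of row `a` outside the class of `x`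
    have houtside : ∀ y ∉ T, (Matrix.of (zeta C) + 1 - Matrix.of (eFun C)) a y * u y = 0 := by
      intro y hy
      by_cases huy : u y = 0
      · rw [huy, mul_zero]
      refine mul_eq_zero_of_left (zeta_add_one_sub_eFun_apply_of_isEmpty ⟨fun f => hy ?_⟩) _
      obtain ⟨g⟩ := hmax y huy ⟨ia.hom ≫ f⟩
      simpa [T] using nonempty_iso_of_hom_of_hom hEI (ia.hom ≫ f) g
    have h : ∑ y, (Matrix.of (zeta C) + 1 - Matrix.of (eFun C)) a y * u y = 0 := congrFun hu a
    rw [← Finset.sum_subset (Finset.subset_univ T) fun y _ hy => houtside y hy] at h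
    have hinside : ∀ y ∈ T, (Matrix.of (zeta C) + 1 - Matrix.of (eFun C)) a y
        = (zeta C x x - 1 / isoCard C x) + (if a = y then 1 else 0) := fun y hy =>
      zeta_add_one_sub_eFun_apply_of_iso ia (Finset.mem_filter.mp hy).2.some
    rw [Finset.sum_congr rfl fun y hy => by rw [hinside y hy]] at h
    simpa only [add_mul, Finset.sum_add_distrib, ← Finset.mul_sum, Finset.sum_boole_mul,
      if_pos ha] using h
  refine hx (eq_zero_of_forall_mul_sum_add_eq_zero ?_ hrow x (by simpa [T] using ⟨Iso.refl x⟩))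
  have hm : (T.card : ℚ) = isoCard C x := rfl
  have : Nonempty (x ⟶ x) := ⟨𝟙 x⟩
  have hg : zeta C x x ≠ 0 := Nat.cast_ne_zero.mpr Fintype.card_ne_zero
  rw [hm, mul_sub, mul_one_div_cancel (isoCard_pos x).ne', add_sub_cancel]
  exact mul_ne_zero (isoCard_pos x).ne' hg

theorem isUnit_zeta_add_one_sub_eFun (hEI : ∀ (x : C) (f : x ⟶ x), IsIso f) :
    IsUnit (Matrix.of (zeta C) + 1 - Matrix.of (eFun C)) := by
  rw [Matrix.isUnit_iff_isUnit_det, isUnit_iff_ne_zero, ne_eq, ← Matrix.exists_mulVec_eq_zero_iff]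
  rintro ⟨u, hne, hu⟩
  exact hne (eq_zero_of_zeta_add_one_sub_eFun_mulVec_eq_zero hEI hu)

end Category

/-- every finite EI-category (every endomorphism is an isomorphism)
has skeletal Möbius inversion: `ζ_C` is invertible in the corner algebra
`e_C M(C) e_C`. -/
theorem ei_has_skeletal_mobius (C : Type u) [Category.{v} C] [Fintype C]
    [∀ x y : C, Fintype (x ⟶ y)]
    (hEI : ∀ (x : C) (f : x ⟶ x), IsIso f) :
    ∃ ν : C → C → ℚ, conv C (eFun C) (conv C ν (eFun C)) = ν ∧
      conv C (zeta C) ν = eFun C ∧ conv C ν (zeta C) = eFun C :=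
  exists_corner_inverse_of_isUnit_add_one_sub isIdempotentElem_eFun eFun_mul_zeta zeta_mul_eFun
    (isUnit_zeta_add_one_sub_eFun hEI)
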